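/- Let l be a prelogarithmic section of k((G)), let U ⊆ H be subgroups of G satisfying condition (†), and let ψ : G → G be a morphism of (k((G)),l) into itself. Then the subgroups ψ(U) ⊆ ψ(H) of G also satisfy condition (†). -/

import Mathlib

/-! Common framework: fields of generalized power series `k((G))` over a multiplicative
linearly ordered abelian group `G`, realized as Mathlib Hahn series over the additive
order-dual of `G` (so that anti well-ordered supports in `G` become partially
well-ordered supports), with the anti-lexicographic order. -/

noncomputable section
open HahnSeries
open scoped Classical

/-- The additive order-dual copy of the multiplicative group `G`:
anti well-ordered subsets of `G` correspond to well-ordered subsets of `gdual G`. -/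
abbrev gdual (G : Type*) [CommGroup G] [LinearOrder G] [IsOrderedMonoid G] : Type _ := Additive Gᵒᵈ

/-- View an element of `G` as an exponent (element of `gdual G`). -/
def toGd {G : Type*} [CommGroup G] [LinearOrder G] [IsOrderedMonoid G] (g : G) : gdual G :=
  Additive.ofMul (OrderDual.toDual g)

/-- View an exponent (element of `gdual G`) as an element of `G`. -/
def toG {G : Type*} [CommGroup G] [LinearOrder G] [IsOrderedMonoid G] (γ : gdual G) : G :=
  OrderDual.ofDual (Additive.toMul γ)

section HahnOrder

variable {k : Type*} [Field k] [LinearOrder k] [IsStrictOrderedRing k] {Γ' : Type*} [LinearOrder Γ']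

theorem HahnSeries.leadingCoeff_of_ne {x : HahnSeries Γ' k} (hx : x ≠ 0) :
    x.leadingCoeff = x.coeff (x.isWF_support.min (HahnSeries.support_nonempty_iff.2 hx)) := by
  rw [HahnSeries.leadingCoeff_of_ne_zero hx, HahnSeries.untop_orderTop_of_ne_zero hx]

theorem hahn_leadingCoeff_neg (x : HahnSeries Γ' k) : (-x).leadingCoeff = -x.leadingCoeff := by
  by_cases h : x = 0
  · simp [h]
  · have hn : (-x) ≠ 0 := neg_ne_zero.2 h
    rw [HahnSeries.leadingCoeff_of_ne h, HahnSeries.leadingCoeff_of_ne hn]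
    have hmin : (-x).isWF_support.min (HahnSeries.support_nonempty_iff.2 hn)
        = x.isWF_support.min (HahnSeries.support_nonempty_iff.2 h) := by
      apply le_antisymm
      · exact Set.IsWF.min_le _ _ (by
          rw [HahnSeries.support_neg (x := x)]
          exact x.isWF_support.min_mem (HahnSeries.support_nonempty_iff.2 h))
      · refine Set.IsWF.min_le _ _ ?_
        rw [← HahnSeries.support_neg (x := x)]
        exact (-x).isWF_support.min_mem (HahnSeries.support_nonempty_iff.2 hn)
    rw [hmin, HahnSeries.coeff_neg]

theorem hahn_leadingCoeff_add_pos {a b : HahnSeries Γ' k}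
    (ha : 0 < a.leadingCoeff) (hb : 0 < b.leadingCoeff) : 0 < (a + b).leadingCoeff := by
  have key : ∀ x y : HahnSeries Γ' k, 0 < x.leadingCoeff → 0 < y.leadingCoeff →
      ∀ (hx0 : x ≠ 0) (hy0 : y ≠ 0),
      x.isWF_support.min (HahnSeries.support_nonempty_iff.2 hx0) ≤
        y.isWF_support.min (HahnSeries.support_nonempty_iff.2 hy0) →
      0 < (x + y).leadingCoeff := by
    intro x y hx hy hx0 hy0 hle
    set mx := x.isWF_support.min (HahnSeries.support_nonempty_iff.2 hx0) with hmx
    set my := y.isWF_support.min (HahnSeries.support_nonempty_iff.2 hy0) with hmy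
    have hcx : x.coeff mx = x.leadingCoeff := (HahnSeries.leadingCoeff_of_ne hx0).symm
    have hcoeff : 0 < (x + y).coeff mx := by
      rcases lt_or_eq_of_le hle with hlt | heq
      · have hny : y.coeff mx = 0 := by
          by_contra hc
          exact absurd (Set.IsWF.min_le _ _ (by rwa [HahnSeries.mem_support])) (not_le.2 hlt)
        rw [HahnSeries.coeff_add, hny, add_zero, hcx]; exact hx
      · have hcy : y.coeff mx = y.leadingCoeff := by
          rw [heq]; exact (HahnSeries.leadingCoeff_of_ne hy0).symm
        rw [HahnSeries.coeff_add, hcx, hcy]; exact add_pos hx hy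
    have hmem : mx ∈ (x + y).support := by
      rw [HahnSeries.mem_support]; exact ne_of_gt hcoeff
    have hxy0 : x + y ≠ 0 := HahnSeries.support_nonempty_iff.1 ⟨mx, hmem⟩
    have hminxy : (x + y).isWF_support.min (HahnSeries.support_nonempty_iff.2 hxy0) = mx := by
      apply le_antisymm (Set.IsWF.min_le _ _ hmem)
      have hmm := (x + y).isWF_support.min_mem (HahnSeries.support_nonempty_iff.2 hxy0)
      rcases HahnSeries.support_add_subset _ _ hmm with hmem' | hmem'
      · exact Set.IsWF.min_le _ _ hmem'
      · exact le_trans hle (Set.IsWF.min_le _ _ hmem')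
    rw [HahnSeries.leadingCoeff_of_ne hxy0, hminxy]
    exact hcoeff
  have ha0 : a ≠ 0 := by intro h; rw [h] at ha; simp at ha
  have hb0 : b ≠ 0 := by intro h; rw [h] at hb; simp at hb
  rcases le_total (a.isWF_support.min (HahnSeries.support_nonempty_iff.2 ha0))
      (b.isWF_support.min (HahnSeries.support_nonempty_iff.2 hb0)) with hle | hle
  · exact key a b ha hb ha0 hb0 hle
  · rw [add_comm]; exact key b a hb ha hb0 ha0 hle

/-- The anti-lexicographic linear order on generalized power series:
`x` is positive iff its leading coefficient (the coefficient at the valuation `v x`,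
i.e. at the largest element of the support) is positive. -/
instance instHahnLinearOrder : LinearOrder (HahnSeries Γ' k) where
  le x y := x = y ∨ 0 < (y - x).leadingCoeff
  lt x y := 0 < (y - x).leadingCoeff
  le_refl x := Or.inl rfl
  le_trans x y z hxy hyz := by
    rcases hxy with rfl | hxy
    · exact hyz
    rcases hyz with rfl | hyz
    · exact Or.inr hxy
    · refine Or.inr ?_
      have := hahn_leadingCoeff_add_pos hyz hxy
      rwa [sub_add_sub_cancel] at this
  le_antisymm x y hxy hyx := by
    rcases hxy with rfl | hxy
    · rfl
    rcases hyx with rfl | hyx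
    · rfl
    · exfalso
      have h1 : (x - y).leadingCoeff = -(y - x).leadingCoeff := by
        rw [← hahn_leadingCoeff_neg, neg_sub]
      rw [h1] at hyx
      exact absurd hxy (not_lt.2 (le_of_lt (neg_pos.1 hyx)))
  lt_iff_le_not_ge x y := by
    constructor
    · intro h
      refine ⟨Or.inr h, ?_⟩
      rintro (rfl | h')
      · change 0 < (y - y).leadingCoeff at h
        rw [sub_self] at h
        simp at h
      · have h1 : (x - y).leadingCoeff = -(y - x).leadingCoeff := by
          rw [← hahn_leadingCoeff_neg, neg_sub]
        rw [h1] at h'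
        exact absurd h (not_lt.2 (le_of_lt (neg_pos.1 h')))
    · rintro ⟨hle, hnot⟩
      rcases hle with rfl | h
      · exact absurd (Or.inl rfl) hnot
      · exact h
  le_total x y := by
    by_cases h : x = y
    · exact Or.inl (Or.inl h)
    · have h0 : y - x ≠ 0 := sub_ne_zero.2 (Ne.symm h)
      have hlc : (y - x).leadingCoeff ≠ 0 := HahnSeries.leadingCoeff_ne_zero.2 h0
      rcases lt_or_gt_of_ne hlc with hneg | hpos
      · refine Or.inr (Or.inr ?_)
        rw [show x - y = -(y - x) from (neg_sub y x).symm, hahn_leadingCoeff_neg]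
        exact neg_pos.2 hneg
      · exact Or.inl (Or.inr hpos)
  toDecidableLE := fun _ _ => Classical.dec _

/-- With the anti-lexicographic order, `k((G))` is a linearly ordered abelian group. -/
instance instHahnLOACG : IsOrderedAddMonoid (HahnSeries Γ' k) where
  add_le_add_left := by
    intro x y hxy c
    rcases hxy with rfl | h
    · exact le_refl _
    · exact Or.inr (by first | rwa [add_sub_add_left_eq_sub] | rwa [add_sub_add_right_eq_sub])

theorem hahn_lt_iff (x y : HahnSeries Γ' k) : x < y ↔ 0 < (y - x).leadingCoeff := Iff.rfl

theorem hahn_single_pos (a : Γ') : (0 : HahnSeries Γ' k) < HahnSeries.single a 1 := by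
  rw [hahn_lt_iff, sub_zero, HahnSeries.leadingCoeff_of_single]
  exact one_pos

theorem hahn_single_lt_single {a b : Γ'} (hab : b < a) :
    (HahnSeries.single a 1 : HahnSeries Γ' k) < HahnSeries.single b 1 := by
  rw [hahn_lt_iff]
  set δ : HahnSeries Γ' k := HahnSeries.single b 1 - HahnSeries.single a 1 with hδdef
  have hne : b ≠ a := ne_of_lt hab
  have hb : δ.coeff b = 1 := by
    rw [hδdef, HahnSeries.coeff_sub, HahnSeries.coeff_single_same,
      HahnSeries.coeff_single_of_ne hne, sub_zero]
  have hbmem : b ∈ δ.support := by rw [HahnSeries.mem_support, hb]; exact one_ne_zero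
  have hδ : δ ≠ 0 := HahnSeries.support_nonempty_iff.1 ⟨b, hbmem⟩
  have hsub : δ.support ⊆ {b, a} := by
    intro γ hγ
    rw [HahnSeries.mem_support] at hγ
    by_contra hγ'
    simp only [Set.mem_insert_iff, Set.mem_singleton_iff, not_or] at hγ'
    apply hγ
    rw [hδdef, HahnSeries.coeff_sub, HahnSeries.coeff_single_of_ne hγ'.1,
      HahnSeries.coeff_single_of_ne hγ'.2, sub_zero]
  have hmin : δ.isWF_support.min (HahnSeries.support_nonempty_iff.2 hδ) = b := by
    have hmem := δ.isWF_support.min_mem (HahnSeries.support_nonempty_iff.2 hδ)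
    have hle := δ.isWF_support.min_le (HahnSeries.support_nonempty_iff.2 hδ) hbmem
    rcases hsub hmem with h | h
    · exact h
    · exact absurd (h ▸ hle) (not_le.2 hab)
  rw [HahnSeries.leadingCoeff_of_ne hδ, hmin, hb]
  exact one_pos

end HahnOrder

section Series

variable {k : Type*} [Field k] [LinearOrder k] [IsStrictOrderedRing k] {G : Type*} [CommGroup G] [LinearOrder G] [IsOrderedMonoid G]

/-- The summable family `n ↦ (-1)^n/(n+1) • ε^(n+1)` (`ε` of positive order). -/
def logFamily (ε : HahnSeries (gdual G) k) (hε : 0 < ε.orderTop) :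
    HahnSeries.SummableFamily (gdual G) k ℕ where
  toFun n := ((-1 : k) ^ n / ((n : k) + 1)) • ε ^ (n + 1)
  isPWO_iUnion_support' := by
    refine ((HahnSeries.SummableFamily.powers ε).isPWO_iUnion_support).mono ?_
    intro γ hγ
    rw [Set.mem_iUnion] at hγ ⊢
    obtain ⟨n, hn⟩ := hγ
    refine ⟨n + 1, ?_⟩
    rw [HahnSeries.mem_support] at hn ⊢
    intro h
    rw [HahnSeries.SummableFamily.powers_of_orderTop_pos hε] at h
    apply hn
    show (((-1 : k) ^ n / ((n : k) + 1)) • ε ^ (n + 1)).coeff γ = 0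
    rw [HahnSeries.coeff_smul]
    show ((-1 : k) ^ n / ((n : k) + 1)) • (ε ^ (n + 1)).coeff γ = 0
    rw [show (ε ^ (n + 1)).coeff γ = 0 from h, smul_zero]
  finite_co_support' g := by
    have h := (HahnSeries.SummableFamily.powers ε).finite_co_support g
    refine Set.Finite.subset (h.preimage (Set.injOn_of_injective Nat.succ_injective)) ?_
    intro n hn
    simp only [Set.mem_preimage, Set.mem_setOf_eq] at hn ⊢
    intro h0
    apply hn
    show (((-1 : k) ^ n / ((n : k) + 1)) • ε ^ (n + 1)).coeff g = 0
    rw [HahnSeries.coeff_smul]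
    have : ((HahnSeries.SummableFamily.powers ε) (Nat.succ n)).coeff g = 0 := h0
    rw [show (ε ^ (n + 1)).coeff g = 0 by rw [← HahnSeries.SummableFamily.powers_of_orderTop_pos hε]; exact this, smul_zero]

/-- The logarithm on 1-units: `1 + ε ↦ Σ_{i ≥ 1} (-1)^(i-1) ε^i / i`
(for `ε` supported on `G^{<1}`; junk value `0` otherwise). -/
def logOneUnit (ε : HahnSeries (gdual G) k) : HahnSeries (gdual G) k :=
  if hε : 0 < ε.orderTop then (logFamily ε hε).hsum else 0

/-- The canonical extension of an order-preserving embedding `ψ : G₁ → G₂` to the fields of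
generalized power series, applying `ψ` to every monomial (junk value `0` if `ψ` is not
order-preserving). -/
def extMap {k : Type*} [Field k] [LinearOrder k] [IsStrictOrderedRing k] {G₁ G₂ : Type*} [CommGroup G₁] [LinearOrder G₁] [IsOrderedMonoid G₁]
    [CommGroup G₂] [LinearOrder G₂] [IsOrderedMonoid G₂] (ψ : G₁ → G₂) :
    HahnSeries (gdual G₁) k → HahnSeries (gdual G₂) k :=
  if h : StrictMono ψ then
    HahnSeries.embDomain
      (OrderEmbedding.ofStrictMono (fun γ => toGd (ψ (toG γ)))
        (fun a b hab => show toGd (ψ (toG a)) < toGd (ψ (toG b)) from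
          h (show toG b < toG a from hab)))
  else fun _ => 0

/-- The additive subgroup `k((G^{>1}))` of the series supported on `G^{>1}`. -/
def largeSeries (k : Type*) [Field k] [LinearOrder k] [IsStrictOrderedRing k] (G : Type*) [CommGroup G] [LinearOrder G] [IsOrderedMonoid G] :
    AddSubgroup (HahnSeries (gdual G) k) where
  carrier := {f | ∀ γ ∈ f.support, γ < (0 : gdual G)}
  zero_mem' := by intro γ hγ; rw [HahnSeries.support_zero] at hγ; exact absurd hγ (Set.notMem_empty γ)
  add_mem' := by
    intro a b ha hb γ hγ
    rcases HahnSeries.support_add_subset _ _ hγ with h | h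
    exacts [ha γ h, hb γ h]
  neg_mem' := by
    intro a ha γ hγ
    rw [HahnSeries.support_neg] at hγ
    exact ha γ hγ

theorem mem_largeSeries {f : HahnSeries (gdual G) k} :
    f ∈ largeSeries k G ↔ ∀ γ ∈ f.support, γ < (0 : gdual G) := Iff.rfl

/-- `log : (k^{>0}, ·) → (k, +)` is an order-preserving group embedding. -/
structure IsResidueLog (lg : k → k) : Prop where
  map_mul : ∀ a b : k, 0 < a → 0 < b → lg (a * b) = lg a + lg b
  strictMonoOn : StrictMonoOn lg (Set.Ioi 0)

/-- A prelogarithmic section of `k((G))`: an order-preserving group embedding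
`l : (G, ·) → (k((G^{>1})), +)`. -/
structure IsPrelogSection (l : G → HahnSeries (gdual G) k) : Prop where
  supp_large : ∀ g : G, l g ∈ largeSeries k G
  map_mul : ∀ g h : G, l (g * h) = l g + l h
  strictMono : StrictMono l

/-- The prelogarithm associated to a prelogarithmic section `l` and a logarithm `lg` on the
residue field: `L(g·a·(1+ε)) = l(g) + log(a) + Σ (-1)^(i-1) ε^i/i`. -/
def prelogL (lg : k → k) (l : G → HahnSeries (gdual G) k)
    (α : HahnSeries (gdual G) k) : HahnSeries (gdual G) k :=
  l (toG α.order) + HahnSeries.C (lg α.leadingCoeff) +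
    logOneUnit ((HahnSeries.single α.order α.leadingCoeff)⁻¹ * α - 1)

/-- The group of exponentials `G^# = e[k((G^{>1}))]`, a multiplicative copy of the ordered
additive group `k((G^{>1}))`. The element `e(α)` is `Multiplicative.ofAdd ⟨α, _⟩`. -/
abbrev Gsharp (k : Type*) [Field k] [LinearOrder k] [IsStrictOrderedRing k] (G : Type*) [CommGroup G] [LinearOrder G] [IsOrderedMonoid G] :
    Type _ := Multiplicative ↥(largeSeries k G)

/-- The embedding `ι : G → G^#`, `ι(g) := e(l(g))`. -/
def iotaSharp (l : G → HahnSeries (gdual G) k) (hl : ∀ g, l g ∈ largeSeries k G) (g : G) :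
    Gsharp k G :=
  Multiplicative.ofAdd (⟨l g, hl g⟩ : ↥(largeSeries k G))

/-- The prelogarithmic section `l^#` of `k((G^#))`: `l^#(e(α)) := ι(α)`, where
`ι : k((G)) → k((G^#))` is the canonical extension of `ι : G → G^#`. -/
def lsharpFun (l : G → HahnSeries (gdual G) k) (hl : ∀ g, l g ∈ largeSeries k G)
    (x : Gsharp k G) : HahnSeries (gdual (Gsharp k G)) k :=
  extMap (iotaSharp l hl) ((Multiplicative.toAdd x : ↥(largeSeries k G)) : HahnSeries (gdual G) k)

/-- The induced map `ψ^# : G₁^# → G₂^#`, `ψ^#(e(α)) := e(ψ(α))` (junk value `1` if the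
canonical extension of `ψ` does not map `k((G₁^{>1}))` into `k((G₂^{>1}))`). -/
def psiSharp {k : Type*} [Field k] [LinearOrder k] [IsStrictOrderedRing k] {G₁ G₂ : Type*} [CommGroup G₁] [LinearOrder G₁] [IsOrderedMonoid G₁]
    [CommGroup G₂] [LinearOrder G₂] [IsOrderedMonoid G₂] (ψ : G₁ → G₂) (x : Gsharp k G₁) : Gsharp k G₂ :=
  if h : ∀ f ∈ largeSeries k G₁, extMap ψ f ∈ largeSeries k G₂ then
    Multiplicative.ofAdd
      (⟨extMap ψ ((Multiplicative.toAdd x : ↥(largeSeries k G₁)) : HahnSeries (gdual G₁) k),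
        h _ (Multiplicative.toAdd x).2⟩ : ↥(largeSeries k G₂))
  else 1

/-- Condition (†) for subgroups `U ⊆ H` of `G`:
`l(H) < |f|` for every nonzero `f ∈ k((H^{>U}))`. -/
def CondDagger (l : G → HahnSeries (gdual G) k) (U H : Subgroup G) : Prop :=
  ∀ h ∈ H, ∀ f : HahnSeries (gdual G) k, f ≠ 0 →
    (∀ γ ∈ f.support, toG γ ∈ H ∧ ∀ u ∈ U, u < toG γ) → l h < |f|

/-- The growth axiom for a subgroup `H` of `G`:
`l(H) < |f|` for every nonzero `f ∈ k((H^{>1}))`. -/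
def GrowthAxiom (l : G → HahnSeries (gdual G) k) (H : Subgroup G) : Prop :=
  CondDagger l (⊥ : Subgroup G) H

theorem mem_large_of_gt {f : HahnSeries (gdual G) k} {U H : Subgroup G}
    (hf : ∀ γ ∈ f.support, toG γ ∈ H ∧ ∀ u ∈ U, u < toG γ) : f ∈ largeSeries k G :=
  fun γ hγ => show (1 : G) < toG γ from (hf γ hγ).2 1 U.one_mem

/-- The set `H^{#,U} = ι(H)·e[k((H^{>U}))] ⊆ G^#`. -/
def sharpProdSet (l : G → HahnSeries (gdual G) k) (hl : ∀ g, l g ∈ largeSeries k G)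
    (U H : Subgroup G) : Set (Gsharp k G) :=
  {x | ∃ h ∈ H, ∃ f : HahnSeries (gdual G) k,
    ∃ hf : ∀ γ ∈ f.support, toG γ ∈ H ∧ ∀ u ∈ U, u < toG γ,
    x = iotaSharp l hl h *
      Multiplicative.ofAdd (⟨f, mem_large_of_gt hf⟩ : ↥(largeSeries k G))}

end Series

section Hahn

variable (k : Type*) [Field k] [LinearOrder k] [IsStrictOrderedRing k] {Γ : Type*} [LinearOrder Γ]

/-- The Hahn group `Γ^k` of formal products `∏_γ x_γ^(g γ)` with anti well-ordered support,
ordered anti-lexicographically, realized as the multiplicative copy of the additive group of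
Hahn series over `Γᵒᵈ` with coefficients in `k`. -/
abbrev HahnGroup (Γ : Type*) [LinearOrder Γ] (k : Type*) [Field k] [LinearOrder k] [IsStrictOrderedRing k] : Type _ :=
  Multiplicative (HahnSeries Γᵒᵈ k)

/-- The monomial `x_γ` in the Hahn group `Γ^k`. -/
def xMon (γ : Γ) : HahnGroup Γ k :=
  Multiplicative.ofAdd (HahnSeries.single (OrderDual.toDual γ) (1 : k))

/-- The prelogarithmic section `l_σ` on `k((Γ^k))` induced by `σ : Γ → Γ`:
`l_σ(∏_γ x_γ^(g γ)) := Σ_γ (g γ)·x_(σ γ)` (junk value `0` if `σ` is not strictly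
order-preserving). -/
def sigmaSection (σ : Γ → Γ) :
    HahnGroup Γ k → HahnSeries (gdual (HahnGroup Γ k)) k :=
  if hσ : StrictMono σ then fun g =>
    HahnSeries.embDomain
      (OrderEmbedding.ofStrictMono
        (fun γ : Γᵒᵈ => toGd (xMon k (σ (OrderDual.ofDual γ))))
        (fun a b hab =>
          show toGd (xMon k (σ (OrderDual.ofDual a))) < toGd (xMon k (σ (OrderDual.ofDual b)))
          from hahn_single_lt_single
            (show OrderDual.toDual (σ (OrderDual.ofDual a)) <
                OrderDual.toDual (σ (OrderDual.ofDual b)) from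
              hσ (show OrderDual.ofDual b < OrderDual.ofDual a from hab))))
      (Multiplicative.toAdd g)
  else fun _ => 0

/-- The lift `ψ_σ : Γ^k → Γ^k` of `σ : Γ → Γ`, `ψ_σ(∏_γ x_γ^(g γ)) := ∏_γ x_(σ γ)^(g γ)`
(junk value `id` if `σ` is not strictly order-preserving). -/
def sigmaAuto (σ : Γ → Γ) : HahnGroup Γ k → HahnGroup Γ k :=
  if hσ : StrictMono σ then fun g =>
    Multiplicative.ofAdd
      (HahnSeries.embDomain
        (OrderEmbedding.ofStrictMono
          (fun γ : Γᵒᵈ => OrderDual.toDual (σ (OrderDual.ofDual γ)))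
          (fun a b hab =>
            show OrderDual.toDual (σ (OrderDual.ofDual a)) <
                OrderDual.toDual (σ (OrderDual.ofDual b)) from
              hσ (show OrderDual.ofDual b < OrderDual.ofDual a from hab)))
        (Multiplicative.toAdd g))
  else id

end Hahn

/-! The canonical extension of `ψ` is an order embedding of `k((G))`, so it commutes with `|·|`,
and it maps `k((H^{>U}))` onto `k((ψ(H)^{>ψ(U)}))`. Writing a nonzero `f ∈ k((ψ(H)^{>ψ(U)}))`
as `ψ(g)` with `g ∈ k((H^{>U}))`, condition (†) for `(U, H)` gives `l(h) < |g|`, hence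
`l(ψ h) = ψ(l h) < ψ|g| = |f|`. -/

namespace HahnSeries

section EmbDomain

variable {Γ Γ' : Type*} [LinearOrder Γ] [LinearOrder Γ'] (f : Γ ↪o Γ')

theorem leadingCoeff_embDomain {R : Type*} [Zero R] (x : HahnSeries Γ R) :
    (embDomain f x).leadingCoeff = x.leadingCoeff := by
  simp only [leadingCoeff, orderTop_embDomain]
  cases x.orderTop <;> simp

theorem embDomain_sub {R : Type*} [Ring R] (x y : HahnSeries Γ R) :
    embDomain f (x - y) = embDomain f x - embDomain f y :=
  map_sub (embDomainLinearMap (R := R) f) x y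

theorem embDomain_neg {R : Type*} [Ring R] (x : HahnSeries Γ R) :
    embDomain f (-x) = -embDomain f x :=
  map_neg (embDomainLinearMap (R := R) f) x

theorem exists_embDomain_eq_of_support_subset_range {R : Type*} [Zero R] {x : HahnSeries Γ' R}
    (hx : x.support ⊆ Set.range f) : ∃ y : HahnSeries Γ R, embDomain f y = x := by
  refine ⟨⟨fun a => x.coeff (f a), ?_⟩, ?_⟩
  · intro s
    obtain ⟨m, n, hmn, hle⟩ := x.isPWO_support (fun i => ⟨f (s i), (s i).2⟩)
    exact ⟨m, n, hmn, f.le_iff_le.1 hle⟩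
  · ext b
    by_cases hb : b ∈ Set.range f
    · obtain ⟨a, rfl⟩ := hb
      rw [embDomain_coeff]
    · rw [embDomain_of_notMem_range hb, eq_comm]
      by_contra hbx
      exact hb (hx hbx)

variable {k : Type*} [Field k] [LinearOrder k] [IsStrictOrderedRing k]

theorem strictMono_embDomain : StrictMono (embDomain f : HahnSeries Γ k → HahnSeries Γ' k) := by
  intro x y hxy
  rw [hahn_lt_iff] at hxy ⊢
  rwa [← embDomain_sub, leadingCoeff_embDomain]

theorem embDomain_abs (x : HahnSeries Γ k) : embDomain f |x| = |embDomain f x| := by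
  rw [abs, abs, (strictMono_embDomain f).monotone.map_max, embDomain_neg]

end EmbDomain

end HahnSeries

section ExtMap

variable {k : Type*} [Field k] [LinearOrder k] [IsStrictOrderedRing k]
  {G₁ G₂ : Type*} [CommGroup G₁] [LinearOrder G₁] [IsOrderedMonoid G₁]
  [CommGroup G₂] [LinearOrder G₂] [IsOrderedMonoid G₂] {ψ : G₁ → G₂}

def exponentEmbedding (hψ : StrictMono ψ) : gdual G₁ ↪o gdual G₂ :=
  OrderEmbedding.ofStrictMono (fun γ => toGd (ψ (toG γ)))
    (fun a b hab => show toGd (ψ (toG a)) < toGd (ψ (toG b)) from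
      hψ (show toG b < toG a from hab))

theorem extMap_eq_embDomain (hψ : StrictMono ψ) :
    extMap (k := k) ψ = HahnSeries.embDomain (exponentEmbedding hψ) :=
  dif_pos hψ

theorem strictMono_extMap (hψ : StrictMono ψ) : StrictMono (extMap (k := k) ψ) := by
  rw [extMap_eq_embDomain hψ]
  exact HahnSeries.strictMono_embDomain _

theorem extMap_abs (hψ : StrictMono ψ) (f : HahnSeries (gdual G₁) k) :
    extMap ψ |f| = |extMap ψ f| := by
  rw [extMap_eq_embDomain hψ]
  exact HahnSeries.embDomain_abs _ f

theorem coeff_extMap_toGd (hψ : StrictMono ψ) (f : HahnSeries (gdual G₁) k) (g : G₁) :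
    (extMap ψ f).coeff (toGd (ψ g)) = f.coeff (toGd g) := by
  rw [extMap_eq_embDomain hψ]
  exact HahnSeries.embDomain_coeff (a := toGd g)

theorem exists_extMap_eq (hψ : StrictMono ψ) {f : HahnSeries (gdual G₂) k}
    (hf : ∀ γ ∈ f.support, toG γ ∈ Set.range ψ) : ∃ g, extMap ψ g = f := by
  rw [extMap_eq_embDomain hψ]
  refine HahnSeries.exists_embDomain_eq_of_support_subset_range _ fun γ hγ => ?_
  obtain ⟨a, ha⟩ := hf γ hγ
  exact ⟨toGd a, congrArg toGd ha⟩

/-- A series whose image under `extMap ψ` lies in `k((ψ(H)^{>ψ(U)}))` lies in `k((H^{>U}))`. -/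
theorem supportedAbove_of_extMap {ψ : G₁ →* G₂} (hψ : StrictMono ψ) {U H : Subgroup G₁}
    {g : HahnSeries (gdual G₁) k}
    (hg : ∀ γ ∈ (extMap ψ g).support, toG γ ∈ H.map ψ ∧ ∀ u ∈ U.map ψ, u < toG γ) :
    ∀ γ ∈ g.support, toG γ ∈ H ∧ ∀ u ∈ U, u < toG γ := by
  intro γ hγ
  have hψγ : toGd (ψ (toG γ)) ∈ (extMap ψ g).support := by
    rwa [HahnSeries.mem_support, coeff_extMap_toGd hψ]
  obtain ⟨hH, hU⟩ := hg _ hψγ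
  exact ⟨(Subgroup.mem_map_iff_mem hψ.injective).1 hH,
    fun u hu => hψ.lt_iff_lt.1 (hU (ψ u) (Subgroup.mem_map_of_mem ψ hu))⟩

end ExtMap

theorem condDagger_stable_under_morphism_general {k : Type*} [Field k] [LinearOrder k] [IsStrictOrderedRing k]
    {G : Type*} [CommGroup G] [LinearOrder G] [IsOrderedMonoid G]
    (l : G → HahnSeries (gdual G) k)
    (ψ : G →* G) (hψ : StrictMono ψ)
    (hcomm : ∀ g : G, extMap (k := k) (⇑ψ) (l g) = l (ψ g))
    (U H : Subgroup G) (hdag : CondDagger l U H) :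
    CondDagger l (U.map ψ) (H.map ψ) := by
  rintro _ ⟨h, hH, rfl⟩ f hf0 hf
  obtain ⟨g, rfl⟩ := exists_extMap_eq hψ fun γ hγ => Subgroup.map_le_range ψ H (hf γ hγ).1
  have hg0 : g ≠ 0 := by
    rintro rfl
    exact hf0 (by rw [extMap_eq_embDomain hψ, HahnSeries.embDomain_zero])
  have hlt := strictMono_extMap hψ (hdag h hH g hg0 (supportedAbove_of_extMap hψ hf))
  rwa [hcomm, extMap_abs hψ] at hlt

/-- Let `l` be a prelogarithmic section of `k((G))`, let `U ⊆ H` be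
subgroups of `G` satisfying condition (†), and let `ψ : G → G` be a morphism of
`(k((G)),l)` into itself.  Then the subgroups `ψ(U) ⊆ ψ(H)` also satisfy condition (†). -/
theorem condDagger_stable_under_morphism {k : Type*} [Field k] [LinearOrder k] [IsStrictOrderedRing k]
    {G : Type*} [CommGroup G] [LinearOrder G] [IsOrderedMonoid G]
    (l : G → HahnSeries (gdual G) k) (hl : IsPrelogSection l)
    (ψ : G →* G) (hψ : StrictMono ψ)
    (hcomm : ∀ g : G, extMap (k := k) (⇑ψ) (l g) = l (ψ g))
    (U H : Subgroup G) (hUH : U ≤ H) (hdag : CondDagger l U H) :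
    CondDagger l (U.map ψ) (H.map ψ) :=
  condDagger_stable_under_morphism_general l ψ hψ hcomm U H hdag

end
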